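/- The constant term of D_r, i.e. the coefficient of L^0 in the determinant D_r, is strictly positive. (Theorem 5.10(ii), first assertion.) -/

import Mathlib

open Finset

/-- The ring of Laurent polynomials with rational exponents in a formal variable `L`. -/
noncomputable abbrev LaurentQ := AddMonoidAlgebra ℤ ℚ

/-- The monomial `L^q`. -/
noncomputable def Lpow (q : ℚ) : LaurentQ := AddMonoidAlgebra.single q 1

/-- `K i = ∑_{j=0}^{κ_i − 1} L^{j·a_i}`. -/
noncomputable def Kpoly (κ : ℕ → ℕ) (a : ℕ → ℚ) (i : ℕ) : LaurentQ :=
  ∑ j ∈ Finset.range (κ i), Lpow ((j : ℚ) * a i)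

/-- The `(i,j)` entry (with `1`-based indices) of the non-symmetric `L`-deformation `M`
of the intersection matrix of the chain. -/
noncomputable def entry (κ : ℕ → ℕ) (a : ℕ → ℚ) (i j : ℕ) : LaurentQ :=
  if i = j then Kpoly κ a i
  else if Odd i then
    if j + 1 = i then -(Lpow (a (i + 1)))
    else if j = i + 1 then -(Lpow (a (i + 2)))
    else if j = i + 2 then Lpow (a (i + 1)) - 1
    else 0
  else
    if j + 2 = i then Lpow (a (i - 1)) - 1
    else if j + 1 = i then -(Lpow (a (i - 2)))
    else if j = i + 1 then -(Lpow (a (i - 1)))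
    else 0

/-- `D_s`: the determinant of the top-left `s×s` submatrix of `M`. -/
noncomputable def Dpoly (κ : ℕ → ℕ) (a : ℕ → ℚ) (s : ℕ) : LaurentQ :=
  Matrix.det (Matrix.of fun i j : Fin s => entry κ a ((i : ℕ) + 1) ((j : ℕ) + 1))

section EntryLemmas
variable (κ : ℕ → ℕ) (a : ℕ → ℚ)

lemma not_odd_of_mod (i : ℕ) (h : i % 2 = 0) : ¬ Odd i := by rw [Nat.odd_iff]; omega
lemma odd_of_mod (i : ℕ) (h : i % 2 = 1) : Odd i := by rw [Nat.odd_iff]; omega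

lemma entry_diag (i : ℕ) : entry κ a i i = Kpoly κ a i := by simp [entry]

lemma entry_down1_even (i : ℕ) (h : i % 2 = 1) : entry κ a (i+1) i = -(Lpow (a (i-1))) := by
  rw [entry, if_neg (by omega), if_neg (not_odd_of_mod _ (by omega)),
    if_neg (by omega), if_pos rfl]
  congr 3
  all_goals omega

lemma entry_down1_odd (i : ℕ) (h : i % 2 = 0) : entry κ a (i+1) i = -(Lpow (a (i+2))) := by
  rw [entry, if_neg (by omega), if_pos (odd_of_mod _ (by omega)), if_pos rfl]

lemma entry_down2_even (i : ℕ) (h : i % 2 = 0) : entry κ a (i+2) i = Lpow (a (i+1)) - 1 := by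
  rw [entry, if_neg (by omega), if_neg (not_odd_of_mod _ (by omega)), if_pos rfl]
  norm_num

lemma entry_down2_odd (i : ℕ) (h : i % 2 = 1) : entry κ a (i+2) i = 0 := by
  rw [entry, if_neg (by omega), if_pos (odd_of_mod _ (by omega)), if_neg (by omega),
    if_neg (by omega), if_neg (by omega)]

lemma entry_down_big (i p : ℕ) (h : 3 ≤ p) : entry κ a (i+p) i = 0 := by
  by_cases ho : Odd (i+p)
  · rw [entry, if_neg (by omega), if_pos ho, if_neg (by omega), if_neg (by omega), if_neg (by omega)]
  · rw [entry, if_neg (by omega), if_neg ho, if_neg (by omega), if_neg (by omega), if_neg (by omega)]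

lemma entry_right1_odd (i : ℕ) (h : i % 2 = 1) : entry κ a i (i+1) = -(Lpow (a (i+2))) := by
  rw [entry, if_neg (by omega), if_pos (odd_of_mod _ h), if_neg (by omega), if_pos rfl]

lemma entry_right1_even (i : ℕ) (h : i % 2 = 0) : entry κ a i (i+1) = -(Lpow (a (i-1))) := by
  rw [entry, if_neg (by omega), if_neg (not_odd_of_mod _ h), if_neg (by omega),
    if_neg (by omega), if_pos rfl]

lemma entry_right2_odd (i : ℕ) (h : i % 2 = 1) : entry κ a i (i+2) = Lpow (a (i+1)) - 1 := by
  rw [entry, if_neg (by omega), if_pos (odd_of_mod _ h), if_neg (by omega), if_neg (by omega),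
    if_pos rfl]

lemma entry_right2_even (i : ℕ) (h : i % 2 = 0) : entry κ a i (i+2) = 0 := by
  rw [entry, if_neg (by omega), if_neg (not_odd_of_mod _ h), if_neg (by omega), if_neg (by omega),
    if_neg (by omega)]

lemma entry_right_big (i q : ℕ) (h : 3 ≤ q) : entry κ a i (i+q) = 0 := by
  by_cases ho : Odd i
  · rw [entry, if_neg (by omega), if_pos ho, if_neg (by omega), if_neg (by omega), if_neg (by omega)]
  · rw [entry, if_neg (by omega), if_neg ho, if_neg (by omega), if_neg (by omega), if_neg (by omega)]

end EntryLemmas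

section Matrices
variable (κ : ℕ → ℕ) (a : ℕ → ℚ)

/-- rows/cols i..i+m-1 -/
noncomputable def Tmat (i m : ℕ) : Matrix (Fin m) (Fin m) LaurentQ :=
  Matrix.of fun p q => entry κ a (i + p) (i + q)

/-- rows i, i+2, i+3, ..., cols i+1, i+2, ... -/
noncomputable def Vmat (i m : ℕ) : Matrix (Fin m) (Fin m) LaurentQ :=
  Matrix.of fun p q => entry κ a (if (p:ℕ) = 0 then i else i + 1 + p) (i + 1 + q)

/-- rows i, i+1, i+3, i+4, ..., cols i+1, i+2, ... -/
noncomputable def Wmat (i m : ℕ) : Matrix (Fin m) (Fin m) LaurentQ :=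
  Matrix.of fun p q => entry κ a (if (p:ℕ) ≤ 1 then i + p else i + 1 + p) (i + 1 + q)

/-- rows i+1, i+2, ..., cols i, i+2, i+3, ... -/
noncomputable def Xmat (i m : ℕ) : Matrix (Fin m) (Fin m) LaurentQ :=
  Matrix.of fun p q => entry κ a (i + 1 + p) (if (q:ℕ) = 0 then i else i + 1 + q)

lemma succAbove_val {n : ℕ} (k : Fin (n+1)) (p : Fin n) :
    ((k.succAbove p : Fin (n+1)) : ℕ) = if (p:ℕ) < (k:ℕ) then (p:ℕ) else (p:ℕ)+1 := by
  rw [Fin.succAbove]; split_ifs with h1 h2 <;> simp_all [Fin.lt_def]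

lemma det_Tmat_zero (i : ℕ) : (Tmat κ a i 0).det = 1 := Matrix.det_fin_zero

lemma det_Tmat_one (i : ℕ) : (Tmat κ a i 1).det = Kpoly κ a i := by
  rw [Matrix.det_fin_one]
  show entry κ a (i + (0:ℕ)) (i + (0:ℕ)) = _
  simpa using entry_diag κ a i

/-- V-even : fully general in size -/
lemma det_Vmat_even (i m : ℕ) (h : i % 2 = 0) :
    (Vmat κ a i (m+1)).det = -(Lpow (a (i-1)) * (Tmat κ a (i+2) m).det) := by
  rw [Matrix.det_succ_row_zero, Fin.sum_univ_succ]
  have h0 : (Vmat κ a i (m+1)) 0 0 = -(Lpow (a (i-1))) := by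
    show entry κ a (if (0:ℕ) = 0 then i else _) (i + 1 + ((0 : Fin (m+1)):ℕ)) = _
    simpa using entry_right1_even κ a i h
  have hz : ∀ j : Fin m, (Vmat κ a i (m+1)) 0 j.succ = 0 := by
    intro j
    show entry κ a (if (0:ℕ) = 0 then i else _) (i + 1 + ((j.succ : Fin (m+1)):ℕ)) = 0
    simp only [if_pos rfl, Fin.val_succ]
    rcases Nat.eq_zero_or_pos (j:ℕ) with hj | hj
    · rw [show i + 1 + ((j:ℕ)+1) = i + 2 by omega]
      exact entry_right2_even κ a i h
    · rw [show i + 1 + ((j:ℕ)+1) = i + (2 + (j:ℕ)) by omega]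
      exact entry_right_big κ a i _ (by omega)
  have hsub : (Vmat κ a i (m+1)).submatrix Fin.succ ((0 : Fin (m+1)).succAbove) = Tmat κ a (i+2) m := by
    refine Matrix.ext fun p q => ?_
    show entry κ a (if ((p.succ : Fin (m+1)):ℕ) = 0 then i else i + 1 + (p.succ:ℕ)) (i+1+((0:Fin (m+1)).succAbove q :ℕ)) = entry κ a (i+2+(p:ℕ)) (i+2+(q:ℕ))
    simp only [Fin.val_succ, Fin.val_zero]
    rw [succAbove_val]
    split_ifs <;> simp only [Fin.val_zero, Fin.val_succ] at * <;> first | (exfalso; first | omega | exact (by assumption : False)) | (apply congrArg₂ (fun (x y : ℕ) => entry κ a x y) (by omega) (by omega))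
  rw [h0, hsub]
  simp only [hz]
  simp
end Matrices

lemma Lpow_mul (p q : ℚ) : Lpow p * Lpow q = Lpow (p+q) := by
  simp [Lpow, AddMonoidAlgebra.single_mul_single]

section Expansions
variable (κ : ℕ → ℕ) (a : ℕ → ℚ)

lemma det_Vmat_one (i : ℕ) (h : i % 2 = 1) : (Vmat κ a i 1).det = -(Lpow (a (i+2))) := by
  rw [Matrix.det_fin_one]
  show entry κ a (if (0:ℕ) = 0 then i else _) (i + 1 + ((0 : Fin 1):ℕ)) = _
  simpa using entry_right1_odd κ a i h

lemma det_Xmat_one (i : ℕ) (h : i % 2 = 0) : (Xmat κ a i 1).det = -(Lpow (a (i+2))) := by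
  rw [Matrix.det_fin_one]
  show entry κ a (i + 1 + ((0 : Fin 1):ℕ)) (if (0:ℕ) = 0 then i else _) = _
  simpa using entry_down1_odd κ a i h

lemma det_Wmat (i m : ℕ) (h : i % 2 = 0) :
    (Wmat κ a i (m+1)).det = -(Lpow (a (i-1)) * (Vmat κ a (i+1) m).det) := by
  rw [Matrix.det_succ_row_zero, Fin.sum_univ_succ]
  have h0 : (Wmat κ a i (m+1)) 0 0 = -(Lpow (a (i-1))) := by
    show entry κ a (if ((0:Fin (m+1)):ℕ) ≤ 1 then i + ((0:Fin (m+1)):ℕ) else _) (i + 1 + ((0 : Fin (m+1)):ℕ)) = _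
    simpa using entry_right1_even κ a i h
  have hz : ∀ j : Fin m, (Wmat κ a i (m+1)) 0 j.succ = 0 := by
    intro j
    show entry κ a (if ((0:Fin (m+1)):ℕ) ≤ 1 then i + ((0:Fin (m+1)):ℕ) else _) (i + 1 + ((j.succ : Fin (m+1)):ℕ)) = 0
    simp only [Fin.val_succ, Fin.val_zero, if_pos (by omega : (0:ℕ) ≤ 1), Nat.add_zero]
    rcases Nat.eq_zero_or_pos (j:ℕ) with hj | hj
    · rw [show i + 1 + ((j:ℕ)+1) = i + 2 by omega]
      exact entry_right2_even κ a i h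
    · rw [show i + 1 + ((j:ℕ)+1) = i + (2 + (j:ℕ)) by omega]
      exact entry_right_big κ a i _ (by omega)
  have hsub : (Wmat κ a i (m+1)).submatrix Fin.succ ((0 : Fin (m+1)).succAbove) = Vmat κ a (i+1) m := by
    refine Matrix.ext fun p q => ?_
    show entry κ a (if ((p.succ : Fin (m+1)):ℕ) ≤ 1 then i + (p.succ:ℕ) else i + 1 + (p.succ:ℕ)) (i+1+((0:Fin (m+1)).succAbove q :ℕ)) =
      entry κ a (if (p:ℕ) = 0 then i+1 else i+1+1+(p:ℕ)) (i+1+1+(q:ℕ))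
    simp only [Fin.val_succ, Fin.val_zero]
    rw [succAbove_val]
    split_ifs <;> simp only [Fin.val_zero, Fin.val_succ] at * <;> first | (exfalso; first | omega | exact (by assumption : False)) | (apply congrArg₂ (fun (x y : ℕ) => entry κ a x y) (by omega) (by omega))
  rw [h0, hsub]
  simp only [hz]
  simp

lemma det_Vmat_odd (i m : ℕ) (h : i % 2 = 1) :
    (Vmat κ a i (m+2)).det = -(Lpow (a (i+2)) * (Tmat κ a (i+2) (m+1)).det)
      - (Lpow (a (i+1)) - 1) * (Xmat κ a (i+1) (m+1)).det := by
  rw [Matrix.det_succ_row_zero, Fin.sum_univ_succ, Fin.sum_univ_succ]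
  have h0 : (Vmat κ a i (m+2)) 0 0 = -(Lpow (a (i+2))) := by
    show entry κ a (if ((0:Fin (m+2)):ℕ) = 0 then i else _) (i + 1 + ((0 : Fin (m+2)):ℕ)) = _
    simpa using entry_right1_odd κ a i h
  have h1 : (Vmat κ a i (m+2)) 0 ((0 : Fin (m+1)).succ) = Lpow (a (i+1)) - 1 := by
    show entry κ a (if ((0:Fin (m+2)):ℕ) = 0 then i else _) (i + 1 + (((0:Fin (m+1)).succ : Fin (m+2)):ℕ)) = _
    have : i + 1 + (((0:Fin (m+1)).succ : Fin (m+2)):ℕ) = i + 2 := by simp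
    rw [this]
    simpa using entry_right2_odd κ a i h
  have hz : ∀ j : Fin m, (Vmat κ a i (m+2)) 0 j.succ.succ = 0 := by
    intro j
    show entry κ a (if ((0:Fin (m+2)):ℕ) = 0 then i else _) (i + 1 + ((j.succ.succ : Fin (m+2)):ℕ)) = 0
    simp only [Fin.val_succ, Fin.val_zero, if_pos rfl]
    rw [show i + 1 + ((j:ℕ)+1+1) = i + (3 + (j:ℕ)) by omega]
    exact entry_right_big κ a i _ (by omega)
  have hsubT : (Vmat κ a i (m+2)).submatrix Fin.succ ((0 : Fin (m+2)).succAbove) = Tmat κ a (i+2) (m+1) := by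
    refine Matrix.ext fun p q => ?_
    show entry κ a (if ((p.succ : Fin (m+2)):ℕ) = 0 then i else i + 1 + (p.succ:ℕ)) (i+1+((0:Fin (m+2)).succAbove q :ℕ)) =
      entry κ a (i+2+(p:ℕ)) (i+2+(q:ℕ))
    simp only [Fin.val_succ, Fin.val_zero]
    rw [succAbove_val]
    split_ifs <;> simp only [Fin.val_zero, Fin.val_succ] at * <;> first | (exfalso; first | omega | exact (by assumption : False)) | (apply congrArg₂ (fun (x y : ℕ) => entry κ a x y) (by omega) (by omega))
  have hsubX : (Vmat κ a i (m+2)).submatrix Fin.succ (((0:Fin (m+1)).succ : Fin (m+2)).succAbove) = Xmat κ a (i+1) (m+1) := by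
    refine Matrix.ext fun p q => ?_
    show entry κ a (if ((p.succ : Fin (m+2)):ℕ) = 0 then i else i + 1 + (p.succ:ℕ)) (i+1+((((0:Fin (m+1)).succ : Fin (m+2))).succAbove q :ℕ)) =
      entry κ a (i+1+1+(p:ℕ)) (if (q:ℕ) = 0 then i+1 else i+1+1+(q:ℕ))
    simp only [Fin.val_succ, Fin.val_zero]
    rw [succAbove_val]
    split_ifs <;> simp only [Fin.val_zero, Fin.val_succ] at * <;> first | (exfalso; first | omega | exact (by assumption : False)) | (apply congrArg₂ (fun (x y : ℕ) => entry κ a x y) (by omega) (by omega))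
  rw [h0, h1, hsubT, hsubX]
  simp only [hz]
  simp
  try ring

lemma det_Xmat_even (i m : ℕ) (h : i % 2 = 0) :
    (Xmat κ a i (m+2)).det = -(Lpow (a (i+2)) * (Tmat κ a (i+2) (m+1)).det)
      - (Lpow (a (i+1)) - 1) * (Vmat κ a (i+1) (m+1)).det := by
  rw [Matrix.det_succ_column_zero, Fin.sum_univ_succ, Fin.sum_univ_succ]
  have h0 : (Xmat κ a i (m+2)) 0 0 = -(Lpow (a (i+2))) := by
    show entry κ a (i + 1 + ((0 : Fin (m+2)):ℕ)) (if ((0:Fin (m+2)):ℕ) = 0 then i else _) = _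
    simpa using entry_down1_odd κ a i h
  have h1 : (Xmat κ a i (m+2)) ((0 : Fin (m+1)).succ) 0 = Lpow (a (i+1)) - 1 := by
    show entry κ a (i + 1 + (((0:Fin (m+1)).succ : Fin (m+2)):ℕ)) (if ((0:Fin (m+2)):ℕ) = 0 then i else _) = _
    have : i + 1 + (((0:Fin (m+1)).succ : Fin (m+2)):ℕ) = i + 2 := by simp
    rw [this]
    simpa using entry_down2_even κ a i h
  have hz : ∀ p : Fin m, (Xmat κ a i (m+2)) p.succ.succ 0 = 0 := by
    intro p
    show entry κ a (i + 1 + ((p.succ.succ : Fin (m+2)):ℕ)) (if ((0:Fin (m+2)):ℕ) = 0 then i else _) = 0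
    simp only [Fin.val_succ, Fin.val_zero, if_pos rfl]
    rw [show i + 1 + ((p:ℕ)+1+1) = i + (3 + (p:ℕ)) by omega]
    exact entry_down_big κ a i _ (by omega)
  have hsubT : (Xmat κ a i (m+2)).submatrix ((0 : Fin (m+2)).succAbove) Fin.succ = Tmat κ a (i+2) (m+1) := by
    refine Matrix.ext fun p q => ?_
    show entry κ a (i+1+((0:Fin (m+2)).succAbove p :ℕ)) (if ((q.succ : Fin (m+2)):ℕ) = 0 then i else i + 1 + (q.succ:ℕ)) =
      entry κ a (i+2+(p:ℕ)) (i+2+(q:ℕ))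
    simp only [Fin.val_succ, Fin.val_zero]
    rw [succAbove_val]
    split_ifs <;> simp only [Fin.val_zero, Fin.val_succ] at * <;> first | (exfalso; first | omega | exact (by assumption : False)) | (apply congrArg₂ (fun (x y : ℕ) => entry κ a x y) (by omega) (by omega))
  have hsubV : (Xmat κ a i (m+2)).submatrix (((0:Fin (m+1)).succ : Fin (m+2)).succAbove) Fin.succ = Vmat κ a (i+1) (m+1) := by
    refine Matrix.ext fun p q => ?_
    show entry κ a (i+1+((((0:Fin (m+1)).succ : Fin (m+2))).succAbove p :ℕ)) (if ((q.succ : Fin (m+2)):ℕ) = 0 then i else i + 1 + (q.succ:ℕ)) =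
      entry κ a (if (p:ℕ) = 0 then i+1 else i+1+1+(p:ℕ)) (i+1+1+(q:ℕ))
    simp only [Fin.val_succ, Fin.val_zero]
    rw [succAbove_val]
    split_ifs <;> simp only [Fin.val_zero, Fin.val_succ] at * <;> first | (exfalso; first | omega | exact (by assumption : False)) | (apply congrArg₂ (fun (x y : ℕ) => entry κ a x y) (by omega) (by omega))
  rw [h0, h1, hsubT, hsubV]
  simp only [hz]
  simp
  try ring

lemma det_Tmat_two (i : ℕ) : (Tmat κ a i 2).det = Kpoly κ a i * Kpoly κ a (i+1) - Lpow (a (i-1) + a (i+2)) := by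
  rw [Matrix.det_fin_two]
  have h00 : (Tmat κ a i 2) 0 0 = Kpoly κ a i := by
    show entry κ a (i + ((0:Fin 2):ℕ)) (i + ((0:Fin 2):ℕ)) = _
    simpa using entry_diag κ a i
  have h11 : (Tmat κ a i 2) 1 1 = Kpoly κ a (i+1) := by
    show entry κ a (i + ((1:Fin 2):ℕ)) (i + ((1:Fin 2):ℕ)) = _
    simpa using entry_diag κ a (i+1)
  rcases Nat.even_or_odd i with he | ho
  · have h01 : (Tmat κ a i 2) 0 1 = -(Lpow (a (i-1))) := by
      show entry κ a (i + ((0:Fin 2):ℕ)) (i + ((1:Fin 2):ℕ)) = _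
      simpa using entry_right1_even κ a i (Nat.even_iff.mp he)
    have h10 : (Tmat κ a i 2) 1 0 = -(Lpow (a (i+2))) := by
      show entry κ a (i + ((1:Fin 2):ℕ)) (i + ((0:Fin 2):ℕ)) = _
      simpa using entry_down1_odd κ a i (Nat.even_iff.mp he)
    rw [h00, h11, h01, h10]
    rw [show -(Lpow (a (i-1))) * -(Lpow (a (i+2))) = Lpow (a (i-1)) * Lpow (a (i+2)) by ring, Lpow_mul]
  · have h01 : (Tmat κ a i 2) 0 1 = -(Lpow (a (i+2))) := by
      show entry κ a (i + ((0:Fin 2):ℕ)) (i + ((1:Fin 2):ℕ)) = _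
      simpa using entry_right1_odd κ a i (Nat.odd_iff.mp ho)
    have h10 : (Tmat κ a i 2) 1 0 = -(Lpow (a (i-1))) := by
      show entry κ a (i + ((1:Fin 2):ℕ)) (i + ((0:Fin 2):ℕ)) = _
      simpa using entry_down1_even κ a i (Nat.odd_iff.mp ho)
    rw [h00, h11, h01, h10]
    rw [show -(Lpow (a (i+2))) * -(Lpow (a (i-1))) = Lpow (a (i-1)) * Lpow (a (i+2)) by ring, Lpow_mul]

lemma det_Tmat_odd (i m : ℕ) (h : i % 2 = 1) :
    (Tmat κ a i (m+2)).det = Kpoly κ a i * (Tmat κ a (i+1) (m+1)).det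
      + Lpow (a (i-1)) * (Vmat κ a i (m+1)).det := by
  rw [Matrix.det_succ_column_zero, Fin.sum_univ_succ, Fin.sum_univ_succ]
  have h0 : (Tmat κ a i (m+2)) 0 0 = Kpoly κ a i := by
    show entry κ a (i + ((0 : Fin (m+2)):ℕ)) (i + ((0 : Fin (m+2)):ℕ)) = _
    simpa using entry_diag κ a i
  have h1 : (Tmat κ a i (m+2)) ((0 : Fin (m+1)).succ) 0 = -(Lpow (a (i-1))) := by
    show entry κ a (i + (((0:Fin (m+1)).succ : Fin (m+2)):ℕ)) (i + ((0:Fin (m+2)):ℕ)) = _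
    have e1 : i + (((0:Fin (m+1)).succ : Fin (m+2)):ℕ) = i + 1 := by simp
    have e2 : i + ((0:Fin (m+2)):ℕ) = i := by simp
    rw [e1, e2]
    exact entry_down1_even κ a i h
  have hz : ∀ p : Fin m, (Tmat κ a i (m+2)) p.succ.succ 0 = 0 := by
    intro p
    show entry κ a (i + ((p.succ.succ : Fin (m+2)):ℕ)) (i + ((0:Fin (m+2)):ℕ)) = 0
    simp only [Fin.val_succ, Fin.val_zero, Nat.add_zero]
    rcases Nat.eq_zero_or_pos (p:ℕ) with hp | hp
    · rw [show i + ((p:ℕ)+1+1) = i + 2 by omega]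
      exact entry_down2_odd κ a i h
    · rw [show i + ((p:ℕ)+1+1) = i + (2 + (p:ℕ)) by omega]
      exact entry_down_big κ a i _ (by omega)
  have hsubT : (Tmat κ a i (m+2)).submatrix ((0 : Fin (m+2)).succAbove) Fin.succ = Tmat κ a (i+1) (m+1) := by
    refine Matrix.ext fun p q => ?_
    show entry κ a (i+((0:Fin (m+2)).succAbove p :ℕ)) (i + ((q.succ : Fin (m+2)):ℕ)) =
      entry κ a (i+1+(p:ℕ)) (i+1+(q:ℕ))
    simp only [Fin.val_succ, Fin.val_zero]
    rw [succAbove_val]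
    split_ifs <;> simp only [Fin.val_zero, Fin.val_succ] at * <;> first | (exfalso; first | omega | exact (by assumption : False)) | (apply congrArg₂ (fun (x y : ℕ) => entry κ a x y) (by omega) (by omega))
  have hsubV : (Tmat κ a i (m+2)).submatrix (((0:Fin (m+1)).succ : Fin (m+2)).succAbove) Fin.succ = Vmat κ a i (m+1) := by
    refine Matrix.ext fun p q => ?_
    show entry κ a (i+((((0:Fin (m+1)).succ : Fin (m+2))).succAbove p :ℕ)) (i + ((q.succ : Fin (m+2)):ℕ)) =
      entry κ a (if (p:ℕ) = 0 then i else i+1+(p:ℕ)) (i+1+(q:ℕ))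
    simp only [Fin.val_succ, Fin.val_zero]
    rw [succAbove_val]
    split_ifs <;> simp only [Fin.val_zero, Fin.val_succ] at * <;> first | (exfalso; first | omega | exact (by assumption : False)) | (apply congrArg₂ (fun (x y : ℕ) => entry κ a x y) (by omega) (by omega))
  rw [h0, h1, hsubT, hsubV]
  simp only [hz]
  simp
  try ring

lemma det_Tmat_even (i m : ℕ) (h : i % 2 = 0) :
    (Tmat κ a i (m+3)).det = Kpoly κ a i * (Tmat κ a (i+1) (m+2)).det
      + Lpow (a (i+2)) * (Vmat κ a i (m+2)).det
      + (Lpow (a (i+1)) - 1) * (Wmat κ a i (m+2)).det := by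
  rw [Matrix.det_succ_column_zero, Fin.sum_univ_succ, Fin.sum_univ_succ, Fin.sum_univ_succ]
  have h0 : (Tmat κ a i (m+3)) 0 0 = Kpoly κ a i := by
    show entry κ a (i + ((0 : Fin (m+3)):ℕ)) (i + ((0 : Fin (m+3)):ℕ)) = _
    simpa using entry_diag κ a i
  have h1 : (Tmat κ a i (m+3)) ((0 : Fin (m+2)).succ) 0 = -(Lpow (a (i+2))) := by
    show entry κ a (i + (((0:Fin (m+2)).succ : Fin (m+3)):ℕ)) (i + ((0:Fin (m+3)):ℕ)) = _
    have e1 : i + (((0:Fin (m+2)).succ : Fin (m+3)):ℕ) = i + 1 := by simp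
    have e2 : i + ((0:Fin (m+3)):ℕ) = i := by simp
    rw [e1, e2]
    exact entry_down1_odd κ a i h
  have h2 : (Tmat κ a i (m+3)) ((0 : Fin (m+1)).succ.succ) 0 = Lpow (a (i+1)) - 1 := by
    show entry κ a (i + (((0:Fin (m+1)).succ.succ : Fin (m+3)):ℕ)) (i + ((0:Fin (m+3)):ℕ)) = _
    have e1 : i + (((0:Fin (m+1)).succ.succ : Fin (m+3)):ℕ) = i + 2 := by simp
    have e2 : i + ((0:Fin (m+3)):ℕ) = i := by simp
    rw [e1, e2]
    exact entry_down2_even κ a i h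
  have hz : ∀ p : Fin m, (Tmat κ a i (m+3)) p.succ.succ.succ 0 = 0 := by
    intro p
    show entry κ a (i + ((p.succ.succ.succ : Fin (m+3)):ℕ)) (i + ((0:Fin (m+3)):ℕ)) = 0
    simp only [Fin.val_succ, Fin.val_zero, Nat.add_zero]
    rw [show i + ((p:ℕ)+1+1+1) = i + (3 + (p:ℕ)) by omega]
    exact entry_down_big κ a i _ (by omega)
  have hsubT : (Tmat κ a i (m+3)).submatrix ((0 : Fin (m+3)).succAbove) Fin.succ = Tmat κ a (i+1) (m+2) := by
    refine Matrix.ext fun p q => ?_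
    show entry κ a (i+((0:Fin (m+3)).succAbove p :ℕ)) (i + ((q.succ : Fin (m+3)):ℕ)) =
      entry κ a (i+1+(p:ℕ)) (i+1+(q:ℕ))
    simp only [Fin.val_succ, Fin.val_zero]
    rw [succAbove_val]
    split_ifs <;> simp only [Fin.val_zero, Fin.val_succ] at * <;> first | (exfalso; first | omega | exact (by assumption : False)) | (apply congrArg₂ (fun (x y : ℕ) => entry κ a x y) (by omega) (by omega))
  have hsubV : (Tmat κ a i (m+3)).submatrix (((0:Fin (m+2)).succ : Fin (m+3)).succAbove) Fin.succ = Vmat κ a i (m+2) := by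
    refine Matrix.ext fun p q => ?_
    show entry κ a (i+((((0:Fin (m+2)).succ : Fin (m+3))).succAbove p :ℕ)) (i + ((q.succ : Fin (m+3)):ℕ)) =
      entry κ a (if (p:ℕ) = 0 then i else i+1+(p:ℕ)) (i+1+(q:ℕ))
    simp only [Fin.val_succ, Fin.val_zero]
    rw [succAbove_val]
    split_ifs <;> simp only [Fin.val_zero, Fin.val_succ] at * <;> first | (exfalso; first | omega | exact (by assumption : False)) | (apply congrArg₂ (fun (x y : ℕ) => entry κ a x y) (by omega) (by omega))
  have hsubW : (Tmat κ a i (m+3)).submatrix (((0:Fin (m+1)).succ.succ : Fin (m+3)).succAbove) Fin.succ = Wmat κ a i (m+2) := by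
    refine Matrix.ext fun p q => ?_
    show entry κ a (i+((((0:Fin (m+1)).succ.succ : Fin (m+3))).succAbove p :ℕ)) (i + ((q.succ : Fin (m+3)):ℕ)) =
      entry κ a (if (p:ℕ) ≤ 1 then i+(p:ℕ) else i+1+(p:ℕ)) (i+1+(q:ℕ))
    simp only [Fin.val_succ, Fin.val_zero]
    rw [succAbove_val]
    split_ifs <;> simp only [Fin.val_zero, Fin.val_succ] at * <;> first | (exfalso; first | omega | exact (by assumption : False)) | (apply congrArg₂ (fun (x y : ℕ) => entry κ a x y) (by omega) (by omega))
  rw [h0, h1, h2, hsubT, hsubV, hsubW]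
  simp only [hz]
  simp
  rw [Nat.mod_eq_of_lt (by omega : 2 < m + 2 + 1)]
  try ring

end Expansions

/-- The two-component automaton recursion computing the determinant from the bottom
of the chain upwards: level `m` corresponds to the tail chain starting at `i = r+1-m`. -/
noncomputable def TH (κ : ℕ → ℕ) (a : ℕ → ℚ) (r : ℕ) : ℕ → LaurentQ × LaurentQ
  | 0 => (1, 0)
  | m+1 =>
      (Kpoly κ a (r-m) * (TH κ a r m).1
         - Lpow (((κ (r-m) - 1 : ℕ) : ℚ) * a (r-m)) * (TH κ a r m).2,
       Lpow (((κ (r-m) - 1 : ℕ) : ℚ) * a (r-m)) * (TH κ a r m).1 +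
         (Lpow (((κ (r-m) - 2 : ℕ) : ℚ) * a (r-m))
            - Lpow (((κ (r-m) - 1 : ℕ) : ℚ) * a (r-m))) * (TH κ a r m).2)

section Algebra
variable (κ : ℕ → ℕ) (a : ℕ → ℚ)

lemma cast_sub_one (t : ℕ) (h : 1 ≤ t) : ((t - 1 : ℕ) : ℚ) = (t:ℚ) - 1 := by
  push_cast [Nat.cast_sub h]; ring

lemma cast_sub_two (t : ℕ) (h : 2 ≤ t) : ((t - 2 : ℕ) : ℚ) = (t:ℚ) - 2 := by
  push_cast [Nat.cast_sub h]; ring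

/-- algebra for the auxiliary (V/X) identities -/
lemma aux_alg (i : ℕ) (hκ2 : 2 ≤ κ (i+1))
    (hc : (κ (i+1) : ℚ) * a (i+1) = a i + a (i+2)) (Td Hd : LaurentQ) :
    -(Lpow (a (i+2)) * Td) - (Lpow (a (i+1)) - 1) * (-(Lpow (a (i+2) - a (i+1)) * Hd))
     = -(Lpow (a (i+1) - a i) *
        (Lpow (((κ (i+1) - 1 : ℕ):ℚ) * a (i+1)) * Td
          + (Lpow (((κ (i+1) - 2 : ℕ):ℚ) * a (i+1))
              - Lpow (((κ (i+1) - 1 : ℕ):ℚ) * a (i+1))) * Hd)) := by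
  have f1 : Lpow (a (i+1) - a i) * Lpow (((κ (i+1) - 1 : ℕ):ℚ) * a (i+1)) = Lpow (a (i+2)) := by
    rw [Lpow_mul]; congr 1
    rw [cast_sub_one _ (by omega)]; linarith
  have f2 : Lpow (a (i+1) - a i) * Lpow (((κ (i+1) - 2 : ℕ):ℚ) * a (i+1))
      = Lpow (a (i+2) - a (i+1)) := by
    rw [Lpow_mul]; congr 1
    rw [cast_sub_two _ hκ2]; linarith
  have f3 : Lpow (a (i+1)) * Lpow (a (i+2) - a (i+1)) = Lpow (a (i+2)) := by
    rw [Lpow_mul]; congr 1; ring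
  linear_combination (Td - Hd) * f1 + Hd * f2 + Hd * f3

/-- algebra for the main identity, odd case -/
lemma a_odd_alg (i : ℕ) (hκ2 : 2 ≤ κ i)
    (hc : (κ i : ℚ) * a i = a (i-1) + a (i+1)) (Td Hd : LaurentQ) :
    Kpoly κ a i * Td + Lpow (a (i-1)) * (-(Lpow (a (i+1) - a i) * Hd))
     = Kpoly κ a i * Td - Lpow (((κ i - 1 : ℕ):ℚ) * a i) * Hd := by
  have f1 : Lpow (a (i-1)) * Lpow (a (i+1) - a i) = Lpow (((κ i - 1 : ℕ):ℚ) * a i) := by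
    rw [Lpow_mul]; congr 1
    rw [cast_sub_one _ (by omega)]; linarith
  linear_combination (-Hd) * f1

/-- algebra for the main identity, even case -/
lemma a_even_alg (i : ℕ) (hκi : 2 ≤ κ i) (hκi1 : 2 ≤ κ (i+1))
    (hci : (κ i : ℚ) * a i = a (i-1) + a (i+1))
    (hci1 : (κ (i+1) : ℚ) * a (i+1) = a i + a (i+2)) (Td1 Td2 Hd2 : LaurentQ) :
    Kpoly κ a i * Td1 + Lpow (a (i+2)) * (-(Lpow (a (i-1)) * Td2))
      + (Lpow (a (i+1)) - 1) * (-(Lpow (a (i-1)) * (-(Lpow (a (i+2) - a (i+1)) * Hd2))))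
     = Kpoly κ a i * Td1 - Lpow (((κ i - 1 : ℕ):ℚ) * a i) *
        (Lpow (((κ (i+1) - 1 : ℕ):ℚ) * a (i+1)) * Td2
          + (Lpow (((κ (i+1) - 2 : ℕ):ℚ) * a (i+1))
              - Lpow (((κ (i+1) - 1 : ℕ):ℚ) * a (i+1))) * Hd2) := by
  have g1 : Lpow (((κ i - 1 : ℕ):ℚ) * a i) * Lpow (((κ (i+1) - 1 : ℕ):ℚ) * a (i+1))
      = Lpow (a (i+2)) * Lpow (a (i-1)) := by
    rw [Lpow_mul, Lpow_mul]; congr 1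
    rw [cast_sub_one _ (by omega : 1 ≤ κ i), cast_sub_one _ (by omega : 1 ≤ κ (i+1))]; linarith
  have g2 : Lpow (((κ i - 1 : ℕ):ℚ) * a i) * Lpow (((κ (i+1) - 2 : ℕ):ℚ) * a (i+1))
      = Lpow (a (i-1)) * Lpow (a (i+2) - a (i+1)) := by
    rw [Lpow_mul, Lpow_mul]; congr 1
    rw [cast_sub_one _ (by omega : 1 ≤ κ i), cast_sub_two _ hκi1]; linarith
  have g3 : Lpow (a (i+1)) * Lpow (a (i+2) - a (i+1)) = Lpow (a (i+2)) := by
    rw [Lpow_mul]; congr 1; ring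
  linear_combination (Td2 - Hd2) * g1 + Hd2 * g2 + Hd2 * Lpow (a (i-1)) * g3

/-- algebra for the size-1 auxiliary edge case -/
lemma aux_edge_alg (i : ℕ) (hκ2 : 2 ≤ κ (i+1))
    (hc : (κ (i+1) : ℚ) * a (i+1) = a i + a (i+2)) :
    -(Lpow (a (i+2)))
     = -(Lpow (a (i+1) - a i) * (Lpow (((κ (i+1) - 1 : ℕ):ℚ) * a (i+1)) * 1
          + (Lpow (((κ (i+1) - 2 : ℕ):ℚ) * a (i+1))
              - Lpow (((κ (i+1) - 1 : ℕ):ℚ) * a (i+1))) * 0)) := by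
  have f1 : Lpow (a (i+1) - a i) * Lpow (((κ (i+1) - 1 : ℕ):ℚ) * a (i+1)) = Lpow (a (i+2)) := by
    rw [Lpow_mul]; congr 1
    rw [cast_sub_one _ (by omega)]; linarith
  linear_combination f1

/-- algebra for the size-2 main edge case -/
lemma a_two_alg (i : ℕ) (hκi : 2 ≤ κ i) (hκi1 : 2 ≤ κ (i+1))
    (hci : (κ i : ℚ) * a i = a (i-1) + a (i+1))
    (hci1 : (κ (i+1) : ℚ) * a (i+1) = a i + a (i+2)) :
    Kpoly κ a i * Kpoly κ a (i+1) - Lpow (a (i-1) + a (i+2))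
     = Kpoly κ a i * (Kpoly κ a (i+1) * 1 - Lpow (((κ (i+1) - 1 : ℕ):ℚ) * a (i+1)) * 0)
       - Lpow (((κ i - 1 : ℕ):ℚ) * a i) *
          (Lpow (((κ (i+1) - 1 : ℕ):ℚ) * a (i+1)) * 1
            + (Lpow (((κ (i+1) - 2 : ℕ):ℚ) * a (i+1))
                - Lpow (((κ (i+1) - 1 : ℕ):ℚ) * a (i+1))) * 0) := by
  have g1 : Lpow (((κ i - 1 : ℕ):ℚ) * a i) * Lpow (((κ (i+1) - 1 : ℕ):ℚ) * a (i+1))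
      = Lpow (a (i-1) + a (i+2)) := by
    rw [Lpow_mul]; congr 1
    rw [cast_sub_one _ (by omega : 1 ≤ κ i), cast_sub_one _ (by omega : 1 ≤ κ (i+1))]; linarith
  linear_combination g1

end Algebra

theorem det_eq_TH (κ : ℕ → ℕ) (a : ℕ → ℚ) (r : ℕ)
    (hκ : ∀ i, 1 ≤ i → i ≤ r → 2 ≤ κ i)
    (hchain : ∀ i, 1 ≤ i → i ≤ r → (κ i : ℚ) * a i = a (i - 1) + a (i + 1)) :
    ∀ k i, i + k = r + 1 → 1 ≤ i →
      ((Tmat κ a i k).det = (TH κ a r k).1 ∧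
        (2 ≤ k →
          (i % 2 = 1 → (Vmat κ a i (k-1)).det = -(Lpow (a (i+1) - a i) * (TH κ a r (k-1)).2)) ∧
          (i % 2 = 0 → (Xmat κ a i (k-1)).det = -(Lpow (a (i+1) - a i) * (TH κ a r (k-1)).2)))) := by
  intro k
  induction k using Nat.strong_induction_on with
  | _ k IH =>
    intro i hik hi1
    match k, hik with
    | 0, hik =>
      refine ⟨?_, by omega⟩
      rw [det_Tmat_zero]
      rfl
    | 1, hik =>
      refine ⟨?_, by omega⟩
      have hir : i = r := by omega
      rw [det_Tmat_one, hir]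
      show Kpoly κ a r = Kpoly κ a (r-0) * (1:LaurentQ) - _ * (0:LaurentQ)
      simp
    | (n+2), hik =>
      -- basic index facts
      have hir : i ≤ r - 1 := by omega
      have hi1r : i + 1 ≤ r := by omega
      have hchain1 : (κ (i+1) : ℚ) * a (i+1) = a i + a (i+2) := by
        have := hchain (i+1) (by omega) hi1r
        simpa using this
      have hκ1 : 2 ≤ κ (i+1) := hκ (i+1) (by omega) hi1r
      -- the auxiliary identity at this level, both parities
      have haux : (i % 2 = 1 → (Vmat κ a i (n+1)).det
            = -(Lpow (a (i+1) - a i) * (TH κ a r (n+1)).2)) ∧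
          (i % 2 = 0 → (Xmat κ a i (n+1)).det
            = -(Lpow (a (i+1) - a i) * (TH κ a r (n+1)).2)) := by
        match n with
        | 0 =>
          have hirr : i + 1 = r := by omega
          have hTH1 : (TH κ a r 1).2
              = Lpow (((κ (r-0) - 1 : ℕ):ℚ) * a (r-0)) * (1:LaurentQ)
                + (Lpow (((κ (r-0) - 2 : ℕ):ℚ) * a (r-0))
                    - Lpow (((κ (r-0) - 1 : ℕ):ℚ) * a (r-0))) * (0:LaurentQ) := rfl
          have hr0 : r - 0 = i + 1 := by omega
          rw [hr0] at hTH1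
          constructor
          · intro hpar
            rw [det_Vmat_one κ a i hpar, hTH1]
            exact aux_edge_alg κ a i hκ1 hchain1
          · intro hpar
            rw [det_Xmat_one κ a i hpar, hTH1]
            exact aux_edge_alg κ a i hκ1 hchain1
        | (n'+1) =>
          -- IH at level n'+2 for i+1 (gives aux) and level n'+1 for i+2 (gives T)
          have IH1 := IH (n'+2) (by omega) (i+1) (by omega) (by omega)
          have IH2 := IH (n'+1) (by omega) (i+2) (by omega) (by omega)
          have hT2 : (Tmat κ a (i+2) (n'+1)).det = (TH κ a r (n'+1)).1 := IH2.1
          have hTH2 : (TH κ a r (n'+2)).2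
              = Lpow (((κ (r-(n'+1)) - 1 : ℕ):ℚ) * a (r-(n'+1))) * (TH κ a r (n'+1)).1
                + (Lpow (((κ (r-(n'+1)) - 2 : ℕ):ℚ) * a (r-(n'+1)))
                    - Lpow (((κ (r-(n'+1)) - 1 : ℕ):ℚ) * a (r-(n'+1)))) * (TH κ a r (n'+1)).2 := rfl
          have hrn : r - (n'+1) = i + 1 := by omega
          rw [hrn] at hTH2
          constructor
          · intro hpar
            have hX := (IH1.2 (by omega)).2 (by omega)
            have hX' : (Xmat κ a (i+1) (n'+1)).det
                = -(Lpow (a (i+2) - a (i+1)) * (TH κ a r (n'+1)).2) := by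
              simpa using hX
            rw [det_Vmat_odd κ a i n' hpar, hT2, hX', hTH2]
            exact aux_alg κ a i hκ1 hchain1 _ _
          · intro hpar
            have hV := (IH1.2 (by omega)).1 (by omega)
            have hV' : (Vmat κ a (i+1) (n'+1)).det
                = -(Lpow (a (i+2) - a (i+1)) * (TH κ a r (n'+1)).2) := by
              simpa using hV
            rw [det_Xmat_even κ a i n' hpar, hT2, hV', hTH2]
            exact aux_alg κ a i hκ1 hchain1 _ _
      refine ⟨?_, fun _ => haux⟩
      -- main identity
      have hchain0 : (κ i : ℚ) * a i = a (i-1) + a (i+1) := hchain i hi1 (by omega)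
      have hκ0 : 2 ≤ κ i := hκ i hi1 (by omega)
      match n with
      | 0 =>
        -- size 2
        have hTH2 : (TH κ a r 2).1
            = Kpoly κ a (r-1) * (TH κ a r 1).1
              - Lpow (((κ (r-1) - 1 : ℕ):ℚ) * a (r-1)) * (TH κ a r 1).2 := rfl
        have hTH1a : (TH κ a r 1).1 = Kpoly κ a (r-0) * 1
            - Lpow (((κ (r-0) - 1 : ℕ):ℚ) * a (r-0)) * 0 := rfl
        have hTH1b : (TH κ a r 1).2 = Lpow (((κ (r-0) - 1 : ℕ):ℚ) * a (r-0)) * 1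
            + (Lpow (((κ (r-0) - 2 : ℕ):ℚ) * a (r-0))
                - Lpow (((κ (r-0) - 1 : ℕ):ℚ) * a (r-0))) * 0 := rfl
        have hr1 : r - 1 = i := by omega
        have hr0 : r - 0 = i + 1 := by omega
        rw [det_Tmat_two, hTH2, hTH1a, hTH1b, hr1, hr0]
        exact a_two_alg κ a i hκ0 hκ1 hchain0 hchain1
      | (n'+1) =>
        have IH1 := IH (n'+2) (by omega) (i+1) (by omega) (by omega)
        have hT1 : (Tmat κ a (i+1) (n'+2)).det = (TH κ a r (n'+2)).1 := IH1.1
        have hTHk : (TH κ a r (n'+3)).1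
            = Kpoly κ a (r-(n'+2)) * (TH κ a r (n'+2)).1
              - Lpow (((κ (r-(n'+2)) - 1 : ℕ):ℚ) * a (r-(n'+2))) * (TH κ a r (n'+2)).2 := rfl
        have hrn : r - (n'+2) = i := by omega
        rw [hrn] at hTHk
        rcases Nat.even_or_odd i with he | ho
        · -- even i
          have hpar : i % 2 = 0 := Nat.even_iff.mp he
          have IH2 := IH (n'+1) (by omega) (i+2) (by omega) (by omega)
          have hT2 : (Tmat κ a (i+2) (n'+1)).det = (TH κ a r (n'+1)).1 := IH2.1
          have hVodd := (IH1.2 (by omega)).1 (by omega)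
          have hV' : (Vmat κ a (i+1) (n'+1)).det
              = -(Lpow (a (i+2) - a (i+1)) * (TH κ a r (n'+1)).2) := by
            simpa using hVodd
          have hTH1' : (TH κ a r (n'+2)).2
              = Lpow (((κ (r-(n'+1)) - 1 : ℕ):ℚ) * a (r-(n'+1))) * (TH κ a r (n'+1)).1
                + (Lpow (((κ (r-(n'+1)) - 2 : ℕ):ℚ) * a (r-(n'+1)))
                    - Lpow (((κ (r-(n'+1)) - 1 : ℕ):ℚ) * a (r-(n'+1)))) * (TH κ a r (n'+1)).2 := rfl
          have hrn1 : r - (n'+1) = i + 1 := by omega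
          rw [hrn1] at hTH1'
          rw [show n' + 3 = (n'+2)+1 from rfl] at hTHk
          rw [det_Tmat_even κ a i n' hpar, hT1, det_Vmat_even κ a i (n'+1) hpar,
            det_Wmat κ a i (n'+1) hpar, hV', hT2, hTHk, hTH1']
          exact a_even_alg κ a i hκ0 hκ1 hchain0 hchain1 _ _ _
        · -- odd i
          have hpar : i % 2 = 1 := Nat.odd_iff.mp ho
          have hVthis := haux.1 hpar
          rw [det_Tmat_odd κ a i (n'+1) hpar, hT1, hVthis, hTHk]
          exact a_odd_alg κ a i hκ0 hchain0 _ _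

lemma Lpow_zero_eq_one : Lpow 0 = 1 := by
  rw [Lpow, AddMonoidAlgebra.one_def]

section Positivity
variable (κ : ℕ → ℕ) (a : ℕ → ℚ)

lemma Lpow_coeff_nonneg (c x : ℚ) : 0 ≤ (Lpow c).coeff x := by
  rw [Lpow]
  show (0:ℤ) ≤ Finsupp.single c 1 x
  rw [Finsupp.single_apply]
  split <;> norm_num

lemma mul_coeff_nonneg (f g : LaurentQ) (hf : ∀ q, 0 ≤ f.coeff q) (hg : ∀ q, 0 ≤ g.coeff q) :
    ∀ x, 0 ≤ (f * g).coeff x := by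
  intro x
  rw [AddMonoidAlgebra.mul_apply]
  apply Finset.sum_nonneg
  intro c _
  apply Finset.sum_nonneg
  intro d _
  dsimp only
  split
  · exact mul_nonneg (hf c) (hg d)
  · exact le_refl 0

lemma sumLpow_coeff_nonneg (s : Finset ℕ) (g : ℕ → ℚ) (x : ℚ) :
    0 ≤ (∑ j ∈ s, Lpow (g j)).coeff x := by
  rw [AddMonoidAlgebra.coeff_sum, Finset.sum_apply']
  exact Finset.sum_nonneg fun j _ => Lpow_coeff_nonneg (g j) x

lemma one_coeff_nonneg (x : ℚ) : 0 ≤ (1 : LaurentQ).coeff x := by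
  rw [← Lpow_zero_eq_one]
  exact Lpow_coeff_nonneg 0 x

lemma TH_invariant (r : ℕ) (hκ : ∀ i, 1 ≤ i → i ≤ r → 2 ≤ κ i) :
    ∀ m, m ≤ r → (∀ x, 0 ≤ (TH κ a r m).2.coeff x) ∧
      (∀ x, (TH κ a r m).2.coeff x ≤ (TH κ a r m).1.coeff x) ∧ 1 ≤ (TH κ a r m).1.coeff 0 := by
  intro m
  induction m with
  | zero =>
    intro _
    refine ⟨fun x => le_refl 0, fun x => one_coeff_nonneg x, ?_⟩
    rw [show ((TH κ a r 0).1) = 1 from rfl, ← Lpow_zero_eq_one, Lpow]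
    show (1:ℤ) ≤ Finsupp.single (0:ℚ) (1:ℤ) 0
    rw [Finsupp.single_apply]
    norm_num
  | succ m ih =>
    intro hmr
    obtain ⟨hH, hHT, hT0⟩ := ih (by omega)
    have hi1 : 1 ≤ r - m := by omega
    have hκi : 2 ≤ κ (r - m) := hκ (r - m) hi1 (by omega)
    obtain ⟨t, ht⟩ : ∃ t, κ (r - m) = t + 2 := ⟨κ (r - m) - 2, by omega⟩
    have e1 : κ (r - m) - 1 = t + 1 := by omega
    have e2 : κ (r - m) - 2 = t := by omega
    set i := r - m with hidef
    set T := (TH κ a r m).1 with hTdef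
    set H := (TH κ a r m).2 with hHdef
    set c1 := Lpow (((κ i - 1 : ℕ):ℚ) * a i) with hc1
    set c2 := Lpow (((κ i - 2 : ℕ):ℚ) * a i) with hc2
    have hTnn : ∀ x, 0 ≤ T.coeff x := fun x => le_trans (hH x) (hHT x)
    have hTHnn : ∀ x, 0 ≤ (T - H).coeff x := by
      intro x
      rw [AddMonoidAlgebra.coeff_sub, Finsupp.sub_apply]
      have := hHT x
      omega
    have hc1nn : ∀ x, 0 ≤ c1.coeff x := fun x => Lpow_coeff_nonneg _ x
    have hc2nn : ∀ x, 0 ≤ c2.coeff x := fun x => Lpow_coeff_nonneg _ x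
    -- split of Kpoly
    have hK : Kpoly κ a i = (∑ j ∈ Finset.range (t + 1), Lpow ((j:ℚ) * a i)) + c1 := by
      rw [Kpoly, ht, Finset.sum_range_succ, hc1, e1]
    have hS1 : (∑ j ∈ Finset.range (t + 1), Lpow ((j:ℚ) * a i))
        = (∑ j ∈ Finset.range t, Lpow ((j:ℚ) * a i)) + c2 := by
      rw [Finset.sum_range_succ, hc2, e2]
    have hS1' : (∑ j ∈ Finset.range (t + 1), Lpow ((j:ℚ) * a i))
        = (∑ j ∈ Finset.range t, Lpow ((((j:ℕ)+1:ℕ):ℚ) * a i)) + 1 := by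
      rw [Finset.sum_range_succ']
      simp [Lpow_zero_eq_one]
    have hTH1 : (TH κ a r (m+1)).1 = Kpoly κ a i * T - c1 * H := rfl
    have hTH2 : (TH κ a r (m+1)).2 = c1 * T + (c2 - c1) * H := rfl
    have hH' : (TH κ a r (m+1)).2 = c1 * (T - H) + c2 * H := by
      rw [hTH2]; ring
    have hD' : (TH κ a r (m+1)).1 - (TH κ a r (m+1)).2
        = (∑ j ∈ Finset.range t, Lpow ((j:ℚ) * a i)) * T + c2 * (T - H) := by
      rw [hTH1, hTH2, hK, hS1]; ring
    have hT'' : (TH κ a r (m+1)).1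
        = T + ((∑ j ∈ Finset.range t, Lpow ((((j:ℕ)+1:ℕ):ℚ) * a i)) * T + c1 * (T - H)) := by
      rw [hTH1, hK, hS1']; ring
    refine ⟨?_, ?_, ?_⟩
    · intro x
      rw [hH', AddMonoidAlgebra.coeff_add, Finsupp.add_apply]
      have h1 := mul_coeff_nonneg c1 (T - H) hc1nn hTHnn x
      have h2 := mul_coeff_nonneg c2 H hc2nn hH x
      omega
    · intro x
      have hsub : 0 ≤ ((TH κ a r (m+1)).1 - (TH κ a r (m+1)).2).coeff x := by
        rw [hD', AddMonoidAlgebra.coeff_add, Finsupp.add_apply]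
        have h1 := mul_coeff_nonneg _ T (fun y => sumLpow_coeff_nonneg (Finset.range t) (fun j => ((j:ℕ):ℚ) * a i) y) hTnn x
        have h2 := mul_coeff_nonneg c2 (T - H) hc2nn hTHnn x
        omega
      rw [AddMonoidAlgebra.coeff_sub, Finsupp.sub_apply] at hsub
      omega
    · rw [hT'', AddMonoidAlgebra.coeff_add, Finsupp.add_apply]
      have h1 := mul_coeff_nonneg _ T (fun y => sumLpow_coeff_nonneg (Finset.range t) (fun j => (((j:ℕ)+1:ℕ):ℚ) * a i) y) hTnn 0
      have h2 := mul_coeff_nonneg c1 (T - H) hc1nn hTHnn 0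
      have h3 : 0 ≤ ((∑ j ∈ Finset.range t, Lpow ((((j:ℕ)+1:ℕ):ℚ) * a i)) * T + c1 * (T - H)).coeff 0 := by
        rw [AddMonoidAlgebra.coeff_add, Finsupp.add_apply]
        omega
      omega

end Positivity


/-- Theorem 5.10(ii), first assertion: the constant term of `D_r` is strictly positive. -/
theorem constantTerm_Dpoly_pos (r : ℕ) (hr : 1 ≤ r) (a : ℕ → ℚ) (κ : ℕ → ℕ)
    (hκ : ∀ i, 1 ≤ i → i ≤ r → 2 ≤ κ i)
    (hchain : ∀ i, 1 ≤ i → i ≤ r → (κ i : ℚ) * a i = a (i - 1) + a (i + 1)) :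
    0 < (Dpoly κ a r).coeff 0 := by
  have hmat : (Matrix.of fun p q : Fin r => entry κ a ((p:ℕ)+1) ((q:ℕ)+1)) = Tmat κ a 1 r := by
    refine Matrix.ext fun p q => ?_
    show entry κ a ((p:ℕ)+1) ((q:ℕ)+1) = entry κ a (1+(p:ℕ)) (1+(q:ℕ))
    exact congrArg₂ (fun x y : ℕ => entry κ a x y) (by omega) (by omega)
  have hdet : Dpoly κ a r = (TH κ a r r).1 := by
    rw [Dpoly, hmat]
    exact (det_eq_TH κ a r hκ hchain r 1 (by omega) le_rfl).1
  have hpos := (TH_invariant κ a r hκ r le_rfl).2.2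
  rw [hdet]
  omega
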